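/- Fix M ≥ 1 and x ∈ ℝ^M. Define, for integers N large enough that all factors are positive, f_{M,N}(x) = b_{M,N} · ∏_{j=1}^{M} ( 1 − x_j²/(M+N+1−j) )^{(M+N−j−2)/2}, where b_{M,N} = ∏_{j=1}^{M} Γ((M+N+1−j)/2) / ( √π · Γ((M+N−j)/2) · √(M+N+1−j) ). Then lim_{N→∞} f_{M,N}(x) = (2π)^{−M/2} · exp( −‖x‖²/2 ), the density at x of the standard Gaussian distribution on ℝ^M. -/

import Mathlib

/-!
The density factorises over the coordinates, and each factor converges separately. Gautschi's
inequality `Γ(s + 1/2) ≤ √s Γ(s)`, a consequence of the log-convexity of `Γ`, applied at `s = u`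
and at `s = u - 1/2` squeezes `Γ(u) / (Γ(u - 1/2) √u)` between `1 - 1/(2u)` and `1`; with
`u = t/2` this gives the limit `(2π)^(-1/2)` of the Gamma quotient. The power factor
`(1 - a/t)^((t-3)/2)` tends to `exp(-a/2)` by the classical limit `(1 + a/t)^t → exp a`.
-/

open Filter Real Topology

/-- The normalizing constant
`b_{M,N} = ∏_{j=1}^M Γ((M+N+1-j)/2)/(√π Γ((M+N-j)/2) √(M+N+1-j))` of the projected
uniform density on the sphere. -/
noncomputable def bMN (M N : ℕ) : ℝ :=
  ∏ j ∈ Finset.range M,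
    Real.Gamma (((M : ℝ) + N + 1 - ((j : ℝ) + 1)) / 2) /
      (Real.sqrt Real.pi * Real.Gamma (((M : ℝ) + N - ((j : ℝ) + 1)) / 2) *
        Real.sqrt ((M : ℝ) + N + 1 - ((j : ℝ) + 1)))

theorem Real.Gamma_add_half_le_sqrt_mul_Gamma {s : ℝ} (hs : 0 < s) :
    Gamma (s + 1 / 2) ≤ √s * Gamma s := by
  have h := Gamma_mul_add_mul_le_rpow_Gamma_mul_rpow_Gamma hs (by linarith : 0 < s + 1)
    (by norm_num : (0 : ℝ) < 1 / 2) (by norm_num : (0 : ℝ) < 1 / 2) (by norm_num)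
  have hG := (Gamma_pos_of_pos hs).le
  rw [Gamma_add_one hs.ne', ← mul_rpow hG (by positivity), ← sqrt_eq_rpow,
    show Gamma s * (s * Gamma s) = s * (Gamma s * Gamma s) by ring, sqrt_mul hs.le,
    sqrt_mul_self hG] at h
  convert h using 2
  ring

theorem Real.tendsto_Gamma_div_Gamma_sub_half_mul_sqrt :
    Tendsto (fun u => Gamma u / (Gamma (u - 1 / 2) * √u)) atTop (𝓝 1) := by
  have hlow : Tendsto (fun u : ℝ => 1 - (1 / 2) / u) atTop (𝓝 1) := by
    simpa using tendsto_const_nhds.sub (tendsto_const_nhds.div_atTop (tendsto_id (α := ℝ)))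
  refine tendsto_of_tendsto_of_tendsto_of_le_of_le' hlow tendsto_const_nhds ?_ ?_ <;>
    filter_upwards [eventually_gt_atTop (1 / 2)] with u hu
  all_goals
    have hu' : 0 < u - 1 / 2 := by linarith
    have hden : 0 < Gamma (u - 1 / 2) * √u := mul_pos (Gamma_pos_of_pos hu') (by positivity)
  · -- Gautschi at `u`, with `Γ(u + 1/2) = (u - 1/2) Γ(u - 1/2)`
    have h := Gamma_add_half_le_sqrt_mul_Gamma (by linarith : 0 < u)
    rw [show u + 1 / 2 = u - 1 / 2 + 1 by ring, Gamma_add_one hu'.ne'] at h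
    rw [le_div_iff₀ hden]
    refine le_of_mul_le_mul_right ?_ (sqrt_pos.2 (by linarith : 0 < u))
    calc (1 - 1 / 2 / u) * (Gamma (u - 1 / 2) * √u) * √u
        = (u - 1 / 2) * Gamma (u - 1 / 2) := by
          rw [mul_assoc, mul_assoc, mul_self_sqrt (by linarith)]
          field_simp
      _ ≤ √u * Gamma u := h
      _ = _ := mul_comm _ _
  · -- Gautschi at `u - 1/2`, and `√(u - 1/2) ≤ √u`
    have h := Gamma_add_half_le_sqrt_mul_Gamma hu'
    rw [sub_add_cancel] at h
    rw [div_le_one hden]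
    calc Gamma u ≤ √(u - 1 / 2) * Gamma (u - 1 / 2) := h
      _ ≤ √u * Gamma (u - 1 / 2) := by gcongr; linarith
      _ = _ := mul_comm _ _

theorem Real.tendsto_one_add_div_rpow_mul_add (a b c : ℝ) :
    Tendsto (fun t => (1 + a / t) ^ (b * t + c)) atTop (𝓝 (exp (a * b))) := by
  have hbase : Tendsto (fun t : ℝ => 1 + a / t) atTop (𝓝 1) := by
    simpa using tendsto_const_nhds.add (tendsto_const_nhds.div_atTop (tendsto_id (α := ℝ)))
  have hc : Tendsto (fun t : ℝ => (1 + a / t) ^ c) atTop (𝓝 1) := by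
    simpa using hbase.rpow_const (p := c) (Or.inl one_ne_zero)
  have hb := ((tendsto_one_add_div_rpow_exp a).rpow_const (p := b)
    (Or.inl (exp_pos a).ne')).mul hc
  rw [← exp_mul, mul_one] at hb
  refine hb.congr' ?_
  filter_upwards [hbase.eventually (lt_mem_nhds one_pos)] with t ht
  rw [← rpow_mul ht.le, ← rpow_add ht, mul_comm t b]

theorem tendsto_Gamma_half_div_sqrt_pi_mul_Gamma_mul_sqrt :
    Tendsto (fun t => Gamma (t / 2) / (√π * Gamma ((t - 1) / 2) * √t)) atTop
      (𝓝 ((2 * π) ^ (-(1 : ℝ) / 2))) := by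
  rw [neg_div, rpow_neg (by positivity), ← sqrt_eq_rpow, sqrt_mul zero_le_two]
  have h := (tendsto_Gamma_div_Gamma_sub_half_mul_sqrt.comp
    (tendsto_id.atTop_div_const (two_pos (α := ℝ)))).const_mul (√2 * √π)⁻¹
  rw [mul_one] at h
  refine h.congr' ?_
  filter_upwards [eventually_ge_atTop 0] with t ht
  have hsqrt : √t = √2 * √(t / 2) := by rw [← sqrt_mul zero_le_two, mul_div_cancel₀ t two_ne_zero]
  simp only [Function.comp_apply, id, hsqrt, show (t - 1) / 2 = t / 2 - 1 / 2 by ring]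
  field_simp

theorem tendsto_one_sub_div_rpow_sub_three_div_two (a : ℝ) :
    Tendsto (fun t => (1 - a / t) ^ ((t - 3) / 2)) atTop (𝓝 (exp (-a / 2))) := by
  convert tendsto_one_add_div_rpow_mul_add (-a) (1 / 2) (-3 / 2) using 2 with t
  · rw [neg_div, sub_eq_add_neg]
    ring_nf
  · ring_nf

theorem gaussian_density_eq_prod {ι : Type*} [Fintype ι] (x : ι → ℝ) :
    (2 * π) ^ (-(Fintype.card ι : ℝ) / 2) * exp (-(∑ i, x i ^ 2) / 2) =
      ∏ i, ((2 * π) ^ (-(1 : ℝ) / 2) * exp (-(x i ^ 2) / 2)) := by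
  rw [Finset.prod_mul_distrib, Finset.prod_const, ← exp_sum, Finset.card_univ,
    ← rpow_natCast, ← rpow_mul (by positivity), ← Finset.sum_div, Finset.sum_neg_distrib]
  ring_nf

theorem stmt16_general (M : ℕ) (x : Fin M → ℝ) :
    Tendsto (fun N : ℕ =>
        bMN M N *
          ∏ j : Fin M,
            (1 - x j ^ 2 / ((M : ℝ) + N + 1 - (((j : ℕ) : ℝ) + 1))) ^
              ((((M : ℝ) + N - (((j : ℕ) : ℝ) + 1) - 2)) / 2)
      ) atTop
      (nhds ((2 * Real.pi) ^ (-(M : ℝ) / 2) * Real.exp (-(∑ j, x j ^ 2) / 2))) := by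
  have hdim : ∀ j : Fin M, Tendsto (fun N : ℕ => (M : ℝ) + N + 1 - (((j : ℕ) : ℝ) + 1))
      atTop atTop := fun j =>
    (tendsto_atTop_add_const_right atTop ((M : ℝ) - (j : ℕ)) tendsto_natCast_atTop_atTop).congr
      fun N => by ring
  have hfactor := fun j : Fin M =>
    (tendsto_Gamma_half_div_sqrt_pi_mul_Gamma_mul_sqrt.mul
      (tendsto_one_sub_div_rpow_sub_three_div_two (x j ^ 2))).comp (hdim j)
  have hlimit := gaussian_density_eq_prod x
  rw [Fintype.card_fin] at hlimit
  rw [hlimit]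
  refine (tendsto_finsetProd _ fun j _ => hfactor j).congr fun N => ?_
  rw [bMN, ← Fin.prod_univ_eq_prod_range, ← Finset.prod_mul_distrib]
  refine Finset.prod_congr rfl fun j _ => ?_
  simp only [Function.comp_apply]
  ring_nf

/-- the Poincaré limit: pointwise convergence of the projected
spherical densities `f_{M,N}` to the standard Gaussian density `f_M`. -/
theorem stmt16 (M : ℕ) (hM : 1 ≤ M) (x : Fin M → ℝ) :
    Tendsto (fun N : ℕ =>
        bMN M N *
          ∏ j : Fin M,
            (1 - x j ^ 2 / ((M : ℝ) + N + 1 - (((j : ℕ) : ℝ) + 1))) ^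
              ((((M : ℝ) + N - (((j : ℕ) : ℝ) + 1) - 2)) / 2)
      ) atTop
      (nhds ((2 * Real.pi) ^ (-(M : ℝ) / 2) * Real.exp (-(∑ j, x j ^ 2) / 2))) :=
  stmt16_general M x
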